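/- Cone Lemma: Let Σ be a simplicial complex with cone vΣ over a new vertex v, giving a homomorphism i_v: K[Σ] → K[vΣ]. Let M_{vΣ} ⊆ K[vΣ]^1 be a linear subspace such that the coefficient functional e_v: M_{vΣ} → K is surjective, and set M_Σ = i_v^{-1}(M_{vΣ}). Then i_v induces a graded ring isomorphism K[Σ]/(M_Σ) ≅ K[vΣ]/(M_{vΣ}). -/

import Mathlib

open MvPolynomial

set_option synthInstance.maxHeartbeats 1000000
set_option maxHeartbeats 1000000

/-- A simplicial complex on a vertex type `V`: a nonempty, downward closed
collection of finite subsets of `V`. -/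
structure SComplex (V : Type*) [DecidableEq V] where
  faces : Finset (Finset V)
  nonempty : faces.Nonempty
  down_closed : ∀ σ ∈ faces, ∀ τ ⊆ σ, τ ∈ faces

namespace SComplex

variable {V : Type*} [DecidableEq V]

theorem empty_mem (Δ : SComplex V) : (∅ : Finset V) ∈ Δ.faces := by
  obtain ⟨σ, hσ⟩ := Δ.nonempty
  exact Δ.down_closed σ hσ ∅ (Finset.empty_subset σ)

/-- The Stanley–Reisner ideal of a simplicial complex: generated by the
squarefree monomials `x_S` for non-faces `S`. -/
noncomputable def SRideal (K : Type*) [Field K] (Δ : SComplex V) : Ideal (MvPolynomial V K) :=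
  Ideal.span { p | ∃ S : Finset V, S ∉ Δ.faces ∧ p = ∏ v ∈ S, X v }

/-- The set of `d`-element faces ("facets" of a `(d-1)`-dimensional complex). -/
def facets (Δ : SComplex V) (d : ℕ) : Finset (Finset V) :=
  Δ.faces.filter fun σ => σ.card = d

/-- Purity: every face is contained in a `d`-element face. -/
def Pure (Δ : SComplex V) (d : ℕ) : Prop :=
  ∀ σ ∈ Δ.faces, ∃ τ ∈ Δ.faces, σ ⊆ τ ∧ τ.card = d

/-- Two facets are adjacent if they share a `(d-1)`-element face. -/
def Adj (Δ : SComplex V) (d : ℕ) (σ σ' : Finset V) : Prop :=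
  σ ∈ facets Δ d ∧ σ' ∈ facets Δ d ∧ (σ ∩ σ').card = d - 1

/-- Strong connectivity: any two facets are joined by a face path. -/
def StronglyConnected (Δ : SComplex V) (d : ℕ) : Prop :=
  ∀ σ ∈ facets Δ d, ∀ σ' ∈ facets Δ d, Relation.ReflTransGen (Adj Δ d) σ σ'

/-- A `(d-1)`-dimensional pseudomanifold (without boundary): pure, every
`(d-2)`-face lies in exactly two facets, and strongly connected. -/
def IsPseudomanifold (Δ : SComplex V) (d : ℕ) : Prop :=
  Pure Δ d ∧
  (∀ τ ∈ Δ.faces, τ.card = d - 1 → ((facets Δ d).filter fun σ => τ ⊆ σ).card = 2) ∧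
  StronglyConnected Δ d

/-- The link of a face. -/
def link (Δ : SComplex V) (τ : Finset V) (h : τ ∈ Δ.faces) : SComplex V where
  faces := Δ.faces.filter fun σ => Disjoint σ τ ∧ σ ∪ τ ∈ Δ.faces
  nonempty := ⟨∅, by
    simp only [Finset.mem_filter]
    exact ⟨Δ.empty_mem, Finset.disjoint_empty_left τ, by simpa using h⟩⟩
  down_closed := by
    intro σ hσ ρ hρ
    simp only [Finset.mem_filter] at hσ ⊢
    exact ⟨Δ.down_closed σ hσ.1 ρ hρ, hσ.2.1.mono_left hρ,
      Δ.down_closed _ hσ.2.2 _ (Finset.union_subset_union hρ le_rfl)⟩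

/-- Graph connectivity of a complex: there is a vertex and any two vertices
are joined by an edge path. -/
def Connected (Δ : SComplex V) : Prop :=
  (∃ v, {v} ∈ Δ.faces) ∧
  ∀ u w : V, {u} ∈ Δ.faces → {w} ∈ Δ.faces →
    Relation.ReflTransGen (fun x y => ({x, y} : Finset V) ∈ Δ.faces) u w

/-- A normal pseudomanifold: a pseudomanifold all of whose links of faces of
codimension at least two are connected. -/
def IsNormalPM (Δ : SComplex V) (d : ℕ) : Prop :=
  IsPseudomanifold Δ d ∧
  ∀ τ (h : τ ∈ Δ.faces), τ.card + 2 ≤ d → Connected (Δ.link τ h)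

/-- The star of a vertex, as a simplicial complex (on the same ambient
vertex type). -/
def starComplex (Δ : SComplex V) (v : V) (hv : {v} ∈ Δ.faces) : SComplex V where
  faces := Δ.faces.filter fun τ => insert v τ ∈ Δ.faces
  nonempty := ⟨∅, by
    simp only [Finset.mem_filter]
    exact ⟨Δ.empty_mem, by simpa using hv⟩⟩
  down_closed := by
    intro σ hσ ρ hρ
    simp only [Finset.mem_filter] at hσ ⊢
    exact ⟨Δ.down_closed σ hσ.1 ρ hρ,
      Δ.down_closed _ hσ.2 _ (Finset.insert_subset_insert v hρ)⟩

end SComplex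

section Chains

variable {V : Type*} [DecidableEq V] [Fintype V] [LinearOrder V]
variable (K : Type*) [Field K]

/-- `m`-dimensional chains: functions on faces with `m` elements. -/
def chainsp (Δ : SComplex V) (m : ℕ) : Type _ :=
  {σ : Finset V // σ ∈ Δ.faces ∧ σ.card = m} → K

noncomputable instance (Δ : SComplex V) (m : ℕ) : AddCommGroup (chainsp K Δ m) :=
  Pi.addCommGroup

noncomputable instance (Δ : SComplex V) (m : ℕ) : Module K (chainsp K Δ m) :=
  Pi.module _ _ _

/-- The simplicial boundary map of the (augmented) chain complex, using the
orderings induced by the linear order on `V` and the usual incidence signs. -/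
noncomputable def bdry (Δ : SComplex V) (m : ℕ) :
    chainsp K Δ (m + 1) →ₗ[K] chainsp K Δ m where
  toFun f τ := ∑ v : V,
    if h : v ∉ τ.1 ∧ insert v τ.1 ∈ Δ.faces then
      (-1 : K) ^ ((insert v τ.1).filter fun u => u < v).card *
        f ⟨insert v τ.1, h.2, by rw [Finset.card_insert_of_notMem h.1, τ.2.2]⟩
    else 0
  map_add' f g := by
    funext τ
    show _ = (_ : K) + _
    rw [← Finset.sum_add_distrib]
    refine Finset.sum_congr rfl fun v _ => ?_
    split
    · show _ * ((f _ : K) + g _) = _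
      ring
    · simp
  map_smul' c f := by
    funext τ
    show _ = c * _
    rw [Finset.mul_sum]
    refine Finset.sum_congr rfl fun v _ => ?_
    split
    · show _ * (c * (f _ : K)) = _
      ring
    · simp

/-- The cycles in degree `m` (everything in degree `0`, which is the span of
the empty face in the augmented complex). -/
noncomputable def kerAt (Δ : SComplex V) :
    (m : ℕ) → Submodule K (chainsp K Δ m)
  | 0 => ⊤
  | m + 1 => LinearMap.ker (bdry K Δ m)

/-- The complex has the reduced `K`-homology of an `(n-1)`-dimensional sphere:
it is at most `(n-1)`-dimensional, reduced homology vanishes below the top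
degree, and the top reduced homology is one-dimensional. -/
def HomologySphereShape (Δ : SComplex V) (n : ℕ) : Prop :=
  (∀ σ ∈ Δ.faces, σ.card ≤ n) ∧
  (∀ m < n, kerAt K Δ m = LinearMap.range (bdry K Δ m)) ∧
  Module.finrank K (kerAt K Δ n) =
    Module.finrank K (LinearMap.range (bdry K Δ n)) + 1

/-- A `K`-homology sphere of dimension `d-1`: the complex and all links of
its nonempty faces have the reduced `K`-homology of spheres of the
appropriate dimensions. -/
def IsKHomologySphere (Δ : SComplex V) (d : ℕ) : Prop :=
  HomologySphereShape K Δ d ∧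
  ∀ τ (h : τ ∈ Δ.faces), τ.Nonempty →
    HomologySphereShape K (Δ.link τ h) (d - τ.card)

end Chains

section Linear

variable {V : Type*} [DecidableEq V]
variable (K : Type*) [Field K]

/-- The coefficient of `x_v`, as a linear functional on polynomials. -/
noncomputable def coeffLin (v : V) : MvPolynomial V K →ₗ[K] K where
  toFun p := coeff (Finsupp.single v 1) p
  map_add' p q := coeff_add _ p q
  map_smul' c p := coeff_smul _ c p

/-- `M` is a linearly generic `n`-dimensional subspace of the degree one part:
any at most `n` vertices have linearly independent images in `M^∨`. -/
def LinGenericM [Fintype V] (n : ℕ) (M : Submodule K (MvPolynomial V K)) : Prop :=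
  M ≤ Submodule.span K (Set.range (X : V → MvPolynomial V K)) ∧
  Module.finrank K M = n ∧
  ∀ S : Finset V, S.card ≤ n →
    LinearIndependent K fun v : ↥S => ((coeffLin K v.1).comp M.subtype)

set_option synthInstance.maxHeartbeats 1000000 in
/-- A regular parameter space: an `n`-dimensional subspace of the degree one
part containing a length `n` regular sequence for the Stanley–Reisner ring. -/
def RegularParamSpace [Fintype V] (Δ : SComplex V) (n : ℕ)
    (M : Submodule K (MvPolynomial V K)) : Prop :=
  M ≤ Submodule.span K (Set.range (X : V → MvPolynomial V K)) ∧
  Module.finrank K M = n ∧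
  ∃ ℓ : Fin n → MvPolynomial V K, (∀ i, ℓ i ∈ M) ∧
    RingTheory.Sequence.IsRegular (MvPolynomial V K ⧸ SComplex.SRideal K Δ)
      (List.ofFn fun i => Ideal.Quotient.mk (SComplex.SRideal K Δ) (ℓ i))

/-- Linear genericity of a system of coordinates `a : V → K^d`: the images of
any at most `d` vertices are linearly independent. -/
def LinGeneric [Fintype V] (d : ℕ) (a : V → Fin d → K) : Prop :=
  ∀ S : Finset V, S.card ≤ d → LinearIndependent K fun v : ↥S => a v.1

end Linear
section Cone

variable {V : Type*} [DecidableEq V]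

namespace SComplex

/-- The cone over a complex, with apex the new vertex `none`. -/
def coneC (Δ : SComplex V) : SComplex (Option V) where
  faces := (Δ.faces.image (Finset.image some)) ∪
    (Δ.faces.image fun σ => insert none (σ.image some))
  nonempty := ⟨∅, by
    simp only [Finset.mem_union, Finset.mem_image]
    exact Or.inl ⟨∅, Δ.empty_mem, rfl⟩⟩
  down_closed := by
    intro σ hσ ρ hρ
    simp only [Finset.mem_union, Finset.mem_image] at hσ ⊢
    have key : ∃ τ ∈ Δ.faces, ρ.erase none = τ.image some := by
      obtain ⟨τ₀, hτ₀, rfl⟩ | ⟨τ₀, hτ₀, rfl⟩ := hσ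
      · have : ρ.erase none ⊆ τ₀.image some :=
          (Finset.erase_subset none ρ).trans hρ
        obtain ⟨τ, hττ, hτ⟩ := Finset.subset_image_iff.mp this
        exact ⟨τ, Δ.down_closed τ₀ hτ₀ τ hττ, hτ.symm⟩
      · have : ρ.erase none ⊆ τ₀.image some := by
          intro x hx
          rcases Finset.mem_erase.mp hx with ⟨hx1, hx2⟩
          rcases Finset.mem_insert.mp (hρ hx2) with h | h
          · exact absurd h hx1
          · exact h
        obtain ⟨τ, hττ, hτ⟩ := Finset.subset_image_iff.mp this
        exact ⟨τ, Δ.down_closed τ₀ hτ₀ τ hττ, hτ.symm⟩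
    obtain ⟨τ, hτ, hρτ⟩ := key
    by_cases hn : none ∈ ρ
    · refine Or.inr ⟨τ, hτ, ?_⟩
      rw [← hρτ, Finset.insert_erase hn]
    · refine Or.inl ⟨τ, hτ, ?_⟩
      rw [← hρτ, Finset.erase_eq_self.mpr hn]

/-- The suspension of a complex on `V`, with poles `Sum.inr true` and
`Sum.inr false`: faces are the sets whose `V`-part is a face and which do not
contain both poles. -/
def susp [Fintype V] (Δ : SComplex V) : SComplex (V ⊕ Bool) where
  faces := Finset.univ.filter fun σ : Finset (V ⊕ Bool) =>
    σ.toLeft ∈ Δ.faces ∧ ¬(Sum.inr true ∈ σ ∧ Sum.inr false ∈ σ)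
  nonempty := ⟨∅, by
    simp only [Finset.mem_filter, Finset.mem_univ, true_and]
    exact ⟨by
      rw [show (∅ : Finset (V ⊕ Bool)).toLeft = ∅ from by ext; simp [Finset.mem_toLeft]]
      exact Δ.empty_mem, by simp⟩⟩
  down_closed := by
    intro σ hσ ρ hρ
    simp only [Finset.mem_filter, Finset.mem_univ, true_and] at hσ ⊢
    constructor
    · refine Δ.down_closed _ hσ.1 _ ?_
      intro x hx
      rw [Finset.mem_toLeft] at hx ⊢
      exact hρ hx
    · intro ⟨h1, h2⟩
      exact hσ.2 ⟨hρ h1, hρ h2⟩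

end SComplex

end Cone

section Orientation

variable {V : Type*} [DecidableEq V] [LinearOrder V]
variable (K : Type*) [Field K]

/-- The incidence sign of a vertex in a face, relative to the sorted order. -/
def incSign (σ : Finset V) (v : V) : ℤ :=
  (-1) ^ (σ.filter fun u => u < v).card

/-- An orientation of a `(d-1)`-dimensional pseudomanifold: a choice of sign
for each facet such that the two facets containing any `(d-2)`-face induce
opposite orientations on it. -/
def IsOrientation (Δ : SComplex V) (d : ℕ) (ε : Finset V → ℤ) : Prop :=
  (∀ σ ∈ SComplex.facets Δ d, ε σ = 1 ∨ ε σ = -1) ∧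
  ∀ τ ∈ Δ.faces, τ.card = d - 1 →
    ∀ σ₁ ∈ SComplex.facets Δ d, ∀ σ₂ ∈ SComplex.facets Δ d, σ₁ ≠ σ₂ →
      τ ⊆ σ₁ → τ ⊆ σ₂ → ∀ v₁ ∈ σ₁ \ τ, ∀ v₂ ∈ σ₂ \ τ,
        ε σ₁ * incSign σ₁ v₁ = -(ε σ₂ * incSign σ₂ v₂)

/-- The oriented determinant `[σ]` of a facet: the determinant of the matrix
of coordinates of its vertices (listed in increasing order), multiplied by
the orientation sign. -/
noncomputable def obrack (d : ℕ) (ε : Finset V → ℤ) (a : V → Fin d → K)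
    (σ : Finset V) : K :=
  if h : σ.card = d then
    (ε σ : K) * Matrix.det (Matrix.of fun i j : Fin d => a (σ.orderIsoOfFin h j) i)
  else 0

/-- The linear form `[σ_v]`, as a polynomial in the coordinates on `N`:
the determinant of the coordinate matrix of `σ` with the column of `v`
replaced by the variable vector, multiplied by the orientation sign. -/
noncomputable def obrackVar (d : ℕ) (ε : Finset V → ℤ) (a : V → Fin d → K)
    (σ : Finset V) (v : V) : MvPolynomial (Fin d) K :=
  if h : σ.card = d then
    (ε σ : MvPolynomial (Fin d) K) *
      Matrix.det (Matrix.of fun i j : Fin d =>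
        if (σ.orderIsoOfFin h j : V) = v then X i
        else C (a (σ.orderIsoOfFin h j) i))
  else 0

variable (d : ℕ) (ε : Finset V → ℤ) (a : V → Fin d → K)

/-- The field of rational functions on `N`. -/
abbrev RatFun := FractionRing (MvPolynomial (Fin d) K)

/-- Polynomials on `N` as rational functions. -/
noncomputable def toF : MvPolynomial (Fin d) K →+* RatFun K d :=
  algebraMap (MvPolynomial (Fin d) K) (RatFun K d)

/-- Restriction of an element of the Stanley–Reisner polynomial ring to (the
span of) a facet `σ`, via the Courant functions `Ψ_v = [σ_v]/[σ]`. -/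
noncomputable def restrictF (σ : Finset V) (f : MvPolynomial V K) : RatFun K d :=
  MvPolynomial.eval₂ ((toF K d).comp (C : K →+* MvPolynomial (Fin d) K))
    (fun v => toF K d (obrackVar K d ε a σ v) / toF K d (C (obrack K d ε a σ))) f

/-- The term of the degree map attached to a facet `σ` with value `g` on `σ`:
`g/(χ_σ [σ]) = g·[σ]^{d-1}/∏_{v ∈ σ}[σ_v]`. -/
noncomputable def volTerm (σ : Finset V) (g : MvPolynomial (Fin d) K) : RatFun K d :=
  toF K d g * toF K d (C (obrack K d ε a σ)) ^ (d - 1) /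
    ∏ v ∈ σ, toF K d (obrackVar K d ε a σ v)

/-- The degree map on piecewise polynomials `(g σ)_σ`. -/
noncomputable def VolPP (Δ : SComplex V) (g : Finset V → MvPolynomial (Fin d) K) :
    RatFun K d :=
  ∑ σ ∈ SComplex.facets Δ d, volTerm K d ε a σ (g σ)

/-- The degree map on the Stanley–Reisner polynomial ring. -/
noncomputable def VolSR (Δ : SComplex V) (f : MvPolynomial V K) : RatFun K d :=
  ∑ σ ∈ SComplex.facets Δ d, restrictF K d ε a σ f * toF K d (C (obrack K d ε a σ)) ^ (d - 1) /
    ∏ v ∈ σ, toF K d (obrackVar K d ε a σ v)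

end Orientation

section Deriv

variable {k K : Type*} [CommRing k] [CommRing K] [Algebra k K]

/-- The composite of a finite family of derivations, as a map. -/
def compApply {m : ℕ} (D : Fin m → Derivation k K K) : K → K :=
  (List.ofFn fun j => ⇑(D j)).foldr Function.comp id

end Deriv
section Generic

/-- The field `k(a_x : x ∈ I)` of rational functions over `k` in
indeterminates indexed by `I`. -/
abbrev GField (k : Type*) [Field k] (I : Type*) : Type _ :=
  FractionRing (MvPolynomial I k)

/-- The indeterminate `a_x` as an element of `k(a)`. -/
noncomputable def gen (k : Type*) [Field k] {I : Type*} (x : I) : GField k I :=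
  algebraMap (MvPolynomial I k) (GField k I) (X x)

/-- The generic coordinates `a_{vi}` of the vertices. -/
noncomputable def genCoord (k : Type*) [Field k] (V : Type*) (d : ℕ) (v : V)
    (i : Fin d) : GField k (V × Fin d) := gen k (v, i)

/-- The generic linear system of parameters `ℓ_i = Σ_v a_{vi} x_v`. -/
noncomputable def genL (k : Type*) [Field k] (V : Type*) [Fintype V] (d : ℕ)
    (i : Fin d) : MvPolynomial V (GField k (V × Fin d)) :=
  ∑ v : V, C (genCoord k V d v i) * X v

/-- The ideal `I_Σ + (ℓ_1,…,ℓ_d)` defining the Artinian reduction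
`A^*(Σ)` for the generic parameter space. -/
noncomputable def genJ (k : Type*) [Field k] {V : Type*} [DecidableEq V]
    [Fintype V] (d : ℕ) (Δ : SComplex V) :
    Ideal (MvPolynomial V (GField k (V × Fin d))) :=
  SComplex.SRideal _ Δ ⊔ Ideal.span (Set.range (genL k V d))

end Generic

/-! Pick `m ∈ M_{vΣ}` with `e_v(m) = 1` and write `m = x_v + i_v(p₀)`, so that modulo `(M_{vΣ})`
the apex variable `x_v` becomes `-p₀`. The substitution `σ : x_v ↦ -p₀` is a retraction of
`i_v`, and it is inverse to `i_v` modulo the two ideals: it sends a non-face monomial of `vΣ` to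
a multiple of the non-face monomial of `Σ` obtained by dropping `x_v`, and it sends
`m' ∈ M_{vΣ}` to `i_v⁻¹(m' - e_v(m') m) ∈ M_Σ`. -/

namespace Ideal

variable {R A B : Type*} [CommSemiring R] [CommRing A] [CommRing B] [Algebra R A] [Algebra R B]
  {I : Ideal A} {J : Ideal B}

noncomputable def quotientEquivAlgOfInverse (f : A →ₐ[R] B) (g : B →ₐ[R] A)
    (hf : I ≤ J.comap f) (hg : J ≤ I.comap g)
    (hgf : (Quotient.mkₐ R I).comp (g.comp f) = Quotient.mkₐ R I)
    (hfg : (Quotient.mkₐ R J).comp (f.comp g) = Quotient.mkₐ R J) :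
    (A ⧸ I) ≃ₐ[R] B ⧸ J :=
  AlgEquiv.ofAlgHom (quotientMapₐ J f hf) (quotientMapₐ I g hg)
    (Ideal.Quotient.algHom_ext R hfg) (Ideal.Quotient.algHom_ext R hgf)

end Ideal

namespace SComplex

variable {V : Type*} [DecidableEq V] {K : Type*} [Field K]

theorem mem_coneC_faces_iff (Δ : SComplex V) {σ : Finset (Option V)} :
    σ ∈ Δ.coneC.faces ↔ Finset.eraseNone σ ∈ Δ.faces := by
  constructor
  · simp only [coneC, Finset.mem_union, Finset.mem_image]
    rintro (⟨τ, hτ, rfl⟩ | ⟨τ, hτ, rfl⟩)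
    · rwa [Finset.eraseNone_image_some]
    · convert hτ using 1
      ext v
      simp
  · intro h
    refine Δ.coneC.down_closed (insert none ((Finset.eraseNone σ).image some)) ?_ σ ?_
    · simp only [coneC, Finset.mem_union, Finset.mem_image]
      exact Or.inr ⟨_, h, rfl⟩
    · rw [Finset.image_some_eraseNone]
      exact Finset.insert_erase_subset _ _

theorem SRideal_le_comap_rename_some (Δ : SComplex V) :
    SRideal K Δ ≤ (SRideal K Δ.coneC).comap (rename some) := by
  rw [SRideal, Ideal.span_le]
  rintro _ ⟨S, hS, rfl⟩
  rw [SetLike.mem_coe, Ideal.mem_comap]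
  have hS' : S.image some ∈ Δ.coneC.faces ↔ S ∈ Δ.faces := by
    rw [mem_coneC_faces_iff, Finset.eraseNone_image_some]
  refine Ideal.subset_span ⟨S.image some, hS'.not.2 hS, ?_⟩
  rw [map_prod, Finset.prod_image (Option.some_injective V).injOn]
  simp only [rename_X]

theorem SRideal_coneC_le_comap (Δ : SComplex V)
    (φ : MvPolynomial (Option V) K →ₐ[K] MvPolynomial V K) (hφ : ∀ v, φ (X (some v)) = X v) :
    SRideal K Δ.coneC ≤ (SRideal K Δ).comap φ := by
  rw [SRideal, Ideal.span_le]
  rintro _ ⟨S, hS, rfl⟩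
  rw [mem_coneC_faces_iff] at hS
  rw [SetLike.mem_coe, Ideal.mem_comap]
  refine Ideal.mem_of_dvd _ ?_ (Ideal.subset_span ⟨_, hS, rfl⟩)
  have hprod : ∏ v ∈ Finset.eraseNone S, (X v : MvPolynomial V K) =
      ∏ w ∈ (Finset.eraseNone S).image some, φ (X w) := by
    rw [Finset.prod_image (Option.some_injective V).injOn]
    simp only [hφ]
  rw [hprod, map_prod, Finset.image_some_eraseNone]
  exact Finset.prod_dvd_prod_of_subset _ _ _ (Finset.erase_subset _ _)

end SComplex

section

variable {V : Type*} {K : Type*} [Field K]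

theorem rename_some_apply_of_mem_span_X
    (φ : MvPolynomial (Option V) K →ₐ[K] MvPolynomial V K) (hφ : ∀ v, φ (X (some v)) = X v)
    {q : MvPolynomial (Option V) K}
    (hq : q ∈ Submodule.span K (Set.range (X : Option V → MvPolynomial (Option V) K))) :
    rename some (φ q) = q - coeffLin K none q • (X none - rename some (φ (X none))) := by
  classical
  induction hq using Submodule.span_induction with
  | mem x hx =>
    obtain ⟨_ | v, rfl⟩ := hx
    · simp [coeffLin]
    · simp [coeffLin, coeff_X, hφ, Finsupp.single_eq_single_iff]
  | zero => simp
  | add x y _ _ hx hy => rw [map_add, map_add, hx, hy, map_add, add_smul]; abel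
  | smul c x _ hx => rw [map_smul, map_smul, hx, map_smul, smul_sub, smul_smul, smul_eq_mul]

theorem exists_retraction_rename_some {m : MvPolynomial (Option V) K}
    (hm : m ∈ Submodule.span K (Set.range (X : Option V → MvPolynomial (Option V) K)))
    (hm1 : coeffLin K none m = 1) :
    ∃ σ : MvPolynomial (Option V) K →ₐ[K] MvPolynomial V K, (∀ v, σ (X (some v)) = X v) ∧
      ∀ q ∈ Submodule.span K (Set.range (X : Option V → MvPolynomial (Option V) K)),
        rename some (σ q) = q - coeffLin K none q • m := by
  let τ : MvPolynomial (Option V) K →ₐ[K] MvPolynomial V K := aeval fun o => o.elim 0 X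
  have hτm : rename some (τ m) = m - X none := by
    have h := rename_some_apply_of_mem_span_X τ (fun v => aeval_X _ _) hm
    rwa [aeval_X, Option.elim_none, map_zero, sub_zero, hm1, one_smul] at h
  let σ : MvPolynomial (Option V) K →ₐ[K] MvPolynomial V K := aeval fun o => o.elim (-τ m) X
  have hσX (v : V) : σ (X (some v)) = X v := aeval_X _ _
  refine ⟨σ, hσX, fun q hq => ?_⟩
  rw [rename_some_apply_of_mem_span_X _ hσX hq, aeval_X, Option.elim_none, map_neg, hτm]
  abel_nf

end

open SComplex in
theorem cone_lemma_general
    {V : Type*} [DecidableEq V] (K : Type*) [Field K]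
    (Δ : SComplex V) (M : Submodule K (MvPolynomial (Option V) K))
    (hM : M ≤ Submodule.span K (Set.range (X : Option V → MvPolynomial (Option V) K)))
    (hsurj : Function.Surjective ((coeffLin K (none : Option V)).comp M.subtype)) :
    ∃ e : (MvPolynomial V K ⧸
          (SRideal K Δ ⊔ Ideal.span
            ((Submodule.comap (rename (some : V → Option V)).toLinearMap M :
              Submodule K (MvPolynomial V K)) : Set (MvPolynomial V K)))) ≃+*
        (MvPolynomial (Option V) K ⧸
          (SRideal K Δ.coneC ⊔ Ideal.span (M : Set (MvPolynomial (Option V) K)))),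
      ∀ p : MvPolynomial V K,
        e (Ideal.Quotient.mk _ p) = Ideal.Quotient.mk _ (rename some p) := by
  obtain ⟨⟨m, hmM⟩, hm1⟩ := hsurj 1
  obtain ⟨σ, hσX, hσ⟩ := exists_retraction_rename_some (hM hmM) hm1
  have hm : m ∈ SRideal K Δ.coneC ⊔ Ideal.span (M : Set (MvPolynomial (Option V) K)) :=
    Ideal.mem_sup_right (Ideal.subset_span hmM)
  refine ⟨(Ideal.quotientEquivAlgOfInverse (rename some) σ ?_ ?_ ?_ ?_).toRingEquiv,
    fun p => rfl⟩
  · refine sup_le ((SRideal_le_comap_rename_some Δ).trans (Ideal.comap_mono le_sup_left)) ?_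
    exact Ideal.span_le.2 fun q hq => Ideal.mem_sup_right (Ideal.subset_span hq)
  · refine sup_le ((SRideal_coneC_le_comap Δ σ hσX).trans (Ideal.comap_mono le_sup_left)) ?_
    refine Ideal.span_le.2 fun m' hm' => Ideal.mem_sup_right (Ideal.subset_span ?_)
    show rename some (σ m') ∈ M
    rw [hσ m' (hM hm')]
    exact M.sub_mem hm' (M.smul_mem _ hmM)
  · exact algHom_ext fun v => by simp only [AlgHom.comp_apply, rename_X, hσX]
  · refine algHom_ext fun o => ?_
    cases o with
    | none =>
      have hXnone := hσ (X none) (Submodule.subset_span ⟨none, rfl⟩)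
      simp only [AlgHom.comp_apply, hXnone, Ideal.Quotient.mkₐ_eq_mk, Ideal.Quotient.eq]
      simpa [coeffLin] using hm
    | some v => simp [hσX]

open SComplex in
/-- **Cone Lemma.** If `M_{vΣ} ⊆ K[vΣ]^1` is a subspace on
which the coefficient functional `e_v` is surjective, and
`M_Σ = i_v^{-1}(M_{vΣ})`, then `i_v` induces a (graded) ring isomorphism
`K[Σ]/(M_Σ) ≅ K[vΣ]/(M_{vΣ})`. -/
theorem cone_lemma
    {V : Type*} [DecidableEq V] [Fintype V] (K : Type*) [Field K]
    (Δ : SComplex V) (M : Submodule K (MvPolynomial (Option V) K))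
    (hM : M ≤ Submodule.span K (Set.range (X : Option V → MvPolynomial (Option V) K)))
    (hsurj : Function.Surjective ((coeffLin K (none : Option V)).comp M.subtype)) :
    ∃ e : (MvPolynomial V K ⧸
          (SRideal K Δ ⊔ Ideal.span
            ((Submodule.comap (rename (some : V → Option V)).toLinearMap M :
              Submodule K (MvPolynomial V K)) : Set (MvPolynomial V K)))) ≃+*
        (MvPolynomial (Option V) K ⧸
          (SRideal K Δ.coneC ⊔ Ideal.span (M : Set (MvPolynomial (Option V) K)))),
      ∀ p : MvPolynomial V K,
        e (Ideal.Quotient.mk _ p) = Ideal.Quotient.mk _ (rename some p) :=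
  cone_lemma_general K Δ M hM hsurj
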